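/- arXiv:1804.07703 — 6 statements merged into one kernel-verified Lean document; each statement's English description precedes it below -/
import Mathlib

section
/- Let D ∈ ℚ^{m×n} be a lower triangular matrix with gaps and let D x ≤ u be a double-bounded constraint system (with implied lower bounds l ∈ ℚ^m). Then for every variable index j ∈ {1,…,n}, either there exist l'_j, u'_j ∈ ℚ such that D x ≤ u implies l'_j ≤ x_j and x_j ≤ u'_j (i.e., the coordinate direction e_j is bounded in D x ≤ u), or the j-th column of D consists only of zero entries. -/
open Matrix

/-- `piv A j` is the smallest row index `i` (0-based) with `A i j ≠ 0`,
or `m + j + 1` (a value exceeding `m`) if column `j` is zero. -/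
noncomputable def piv {m n : ℕ} (A : Matrix (Fin m) (Fin n) ℚ) (j : Fin n) : ℕ :=
  if _ : ∃ i : Fin m, A i j ≠ 0 then
    sInf {i : ℕ | ∃ hi : i < m, A ⟨i, hi⟩ j ≠ 0}
  else m + (j : ℕ) + 1

/-- `A` is lower triangular with gaps: for each column `j`, either `piv A j > m`
(the column is zero) or `piv A j < piv A k` for all columns `k` right of `j`. -/
def LowerTriangularWithGaps {m n : ℕ} (A : Matrix (Fin m) (Fin n) ℚ) : Prop :=
  ∀ j : Fin n, m < piv A j ∨ ∀ k : Fin n, j < k → piv A j < piv A k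

lemma piv_mem {m n : ℕ} (A : Matrix (Fin m) (Fin n) ℚ) (j : Fin n)
    (h : ∃ i : Fin m, A i j ≠ 0) :
    ∃ hp : piv A j < m, A ⟨piv A j, hp⟩ j ≠ 0 := by
  rw [piv, dif_pos h]
  have hne : {i : ℕ | ∃ hi : i < m, A ⟨i, hi⟩ j ≠ 0}.Nonempty := by
    obtain ⟨i, hi⟩ := h
    exact ⟨i.val, i.isLt, by simpa using hi⟩
  exact Nat.sInf_mem hne

lemma zero_above {m n : ℕ} (A : Matrix (Fin m) (Fin n) ℚ) (j : Fin n)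
    (i : Fin m) (h : (i : ℕ) < piv A j) : A i j = 0 := by
  by_cases hc : ∃ i : Fin m, A i j ≠ 0
  · rw [piv, dif_pos hc] at h
    have := Nat.notMem_of_lt_sInf h
    simp only [Set.mem_setOf_eq, not_exists, not_not] at this
    simpa using this i.isLt
  · push_neg at hc
    exact hc i

/-- Lower Triangular Double-Bounded Systems: in a double-bounded system
`l ≤ D x ≤ u` with `D` lower triangular with gaps, each variable `x j` is
either bounded or its column in `D` has only zero entries. -/
theorem lower_triangular_double_bounded {m n : ℕ}
    (D : Matrix (Fin m) (Fin n) ℚ) (u l : Fin m → ℚ)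
    (hLTG : LowerTriangularWithGaps D)
    (hDB : ∀ x : Fin n → ℚ, D.mulVec x ≤ u → ∀ i : Fin m, l i ≤ D.mulVec x i) :
    ∀ j : Fin n,
      (∃ lj uj : ℚ, ∀ x : Fin n → ℚ, D.mulVec x ≤ u → lj ≤ x j ∧ x j ≤ uj) ∨
      (∀ i : Fin m, D i j = 0) := by
  have main : ∀ N : ℕ, ∀ j : Fin n, (j : ℕ) < N →
      (∀ i : Fin m, D i j = 0) ∨ ∃ B : ℚ, ∀ x : Fin n → ℚ, D.mulVec x ≤ u → |x j| ≤ B := by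
    intro N
    induction N with
    | zero => intro j hj; exact absurd hj (Nat.not_lt_zero _)
    | succ N ih =>
      intro j hj
      by_cases hz : ∀ i : Fin m, D i j = 0
      · exact Or.inl hz
      right
      push_neg at hz
      obtain ⟨hpm, hpj⟩ := piv_mem D j hz
      set pF : Fin m := ⟨piv D j, hpm⟩ with hpF
      have hgap : ∀ k : Fin n, j < k → piv D j < piv D k := by
        rcases hLTG j with h | h
        · omega
        · exact h
      have hrow : ∀ k : Fin n, j < k → D pF k = 0 := by
        intro k hk
        exact zero_above D k pF (hgap k hk)
      have hC : ∀ k : Fin n, ∃ C : ℚ,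
          (k : ℕ) < (j : ℕ) → ∀ x : Fin n → ℚ, D.mulVec x ≤ u → |D pF k * x k| ≤ C := by
        intro k
        by_cases hk : (k : ℕ) < (j : ℕ)
        · rcases ih k (by omega) with hz' | ⟨B, hB⟩
          · exact ⟨0, fun _ x _ => by simp [hz' pF]⟩
          · refine ⟨|D pF k| * B, fun _ x hx => ?_⟩
            rw [abs_mul]
            exact mul_le_mul_of_nonneg_left (hB x hx) (abs_nonneg _)
        · exact ⟨0, fun h => absurd h hk⟩
      choose C hCspec using hC
      set M : ℚ := max |l pF| |u pF| with hM
      set S : ℚ := ∑ k : Fin n, if (k : ℕ) < (j : ℕ) then C k else 0 with hS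
      refine ⟨(M + S) / |D pF j|, ?_⟩
      intro x hx
      have h1 : l pF ≤ D.mulVec x pF := hDB x hx pF
      have h2 : D.mulVec x pF ≤ u pF := hx pF
      have hMb : |D.mulVec x pF| ≤ M := by
        rw [abs_le]
        constructor
        · have : -M ≤ l pF := by
            have := neg_abs_le (l pF)
            have h' : |l pF| ≤ M := le_max_left _ _
            linarith
          linarith
        · have h' : u pF ≤ M := le_trans (le_abs_self _) (le_max_right _ _)
          linarith
      have hDx : D.mulVec x pF = ∑ k : Fin n, D pF k * x k := by
        simp [Matrix.mulVec, dotProduct]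
      have hsum : D pF j * x j = D.mulVec x pF - ∑ k ∈ Finset.univ.erase j, D pF k * x k := by
        rw [hDx, ← Finset.add_sum_erase _ _ (Finset.mem_univ j)]
        ring
      have hSb : |∑ k ∈ Finset.univ.erase j, D pF k * x k| ≤ S := by
        calc |∑ k ∈ Finset.univ.erase j, D pF k * x k|
            ≤ ∑ k ∈ Finset.univ.erase j, |D pF k * x k| := Finset.abs_sum_le_sum_abs _ _
          _ ≤ ∑ k ∈ Finset.univ.erase j, (if (k : ℕ) < (j : ℕ) then C k else 0) := by
              refine Finset.sum_le_sum ?_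
              intro k hk
              have hkj : k ≠ j := Finset.ne_of_mem_erase hk
              by_cases hlt : (k : ℕ) < (j : ℕ)
              · rw [if_pos hlt]
                exact hCspec k hlt x hx
              · rw [if_neg hlt]
                have hne : (k : ℕ) ≠ (j : ℕ) := fun h => hkj (Fin.ext h)
                have hgt : j < k := Fin.lt_def.mpr (by omega)
                rw [hrow k hgt]
                simp
          _ = S := by
              rw [hS]
              exact Finset.sum_erase _ (if_neg (lt_irrefl _))
      have hkey : |D pF j| * |x j| ≤ M + S := by
        rw [← abs_mul, hsum]
        calc |D.mulVec x pF - ∑ k ∈ Finset.univ.erase j, D pF k * x k|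
            ≤ |D.mulVec x pF| + |∑ k ∈ Finset.univ.erase j, D pF k * x k| := abs_sub _ _
          _ ≤ M + S := add_le_add hMb hSb
      have hpos : 0 < |D pF j| := abs_pos.2 hpj
      rw [le_div_iff₀ hpos, mul_comm]
      exact hkey
  intro j
  rcases main n j j.isLt with hz | ⟨B, hB⟩
  · exact Or.inr hz
  · exact Or.inl ⟨-B, B, fun x hx => abs_le.1 (hB x hx)⟩
end

section
/- Let A x ≤ b be a mixed constraint system with A ∈ ℚ^{m×n}, n = n₁ + n₂, and let V ∈ ℚ^{n×n} be a mixed column transformation matrix. Then the map y ↦ V y is a bijection from the set of mixed solutions of (A V) y ≤ b onto the set of mixed solutions of A x ≤ b; in particular, every mixed solution y of (A V) y ≤ b yields the mixed solution x = V y of A x ≤ b, and conversely every mixed solution x of A x ≤ b yields the mixed solution y = V^{−1} x of (A V) y ≤ b. -/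
open Matrix

/-- `V ∈ ℚ^{(n₁+n₂)×(n₁+n₂)}` is a mixed column transformation matrix. -/
def IsMCTM {n₁ n₂ : ℕ} (V : Matrix (Fin (n₁ + n₂)) (Fin (n₁ + n₂)) ℚ) : Prop :=
  IsUnit V.det ∧
  (∀ (i : Fin n₂) (j : Fin n₁), V (Fin.natAdd n₁ i) (Fin.castAdd n₂ j) = 0) ∧
  IsUnit (Matrix.of fun i j : Fin n₁ => V (Fin.castAdd n₂ i) (Fin.castAdd n₂ j)).det ∧
  (∀ i j : Fin n₂, ∃ z : ℤ, V (Fin.natAdd n₁ i) (Fin.natAdd n₁ j) = (z : ℚ)) ∧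
  ((Matrix.of fun i j : Fin n₂ => V (Fin.natAdd n₁ i) (Fin.natAdd n₁ j)).det = 1 ∨
   (Matrix.of fun i j : Fin n₂ => V (Fin.natAdd n₁ i) (Fin.natAdd n₁ j)).det = -1)

/-- `x` is a mixed solution of `A x ≤ b`: it satisfies all inequalities and
its last `n₂` components are integers. -/
def IsMixedSol {m n₁ n₂ : ℕ} (A : Matrix (Fin m) (Fin (n₁ + n₂)) ℚ) (b : Fin m → ℚ)
    (x : Fin (n₁ + n₂) → ℚ) : Prop :=
  A.mulVec x ≤ b ∧ ∀ j : Fin (n₁ + n₂), n₁ ≤ (j : ℕ) → ∃ z : ℤ, x j = (z : ℚ)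

private lemma int_sum_mem {α : Type*} [Fintype α] (f : α → ℚ)
    (h : ∀ a, ∃ z : ℤ, f a = (z : ℚ)) : ∃ z : ℤ, (∑ a, f a) = (z : ℚ) := by
  refine ⟨∑ a, (h a).choose, ?_⟩
  push_cast
  exact Finset.sum_congr rfl fun a _ => (h a).choose_spec

/-- Mixed Column Transformation Equisatisfiability: `y ↦ V y` is a bijection from
the mixed solutions of `(A V) y ≤ b` onto the mixed solutions of `A x ≤ b`;
in particular every mixed solution `y` of `(A V) y ≤ b` yields the mixed solution
`V y` of `A x ≤ b`, and every mixed solution `x` of `A x ≤ b` yields the mixed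
solution `V⁻¹ x` of `(A V) y ≤ b`. -/
theorem mctm_equisat {m n₁ n₂ : ℕ} (A : Matrix (Fin m) (Fin (n₁ + n₂)) ℚ)
    (b : Fin m → ℚ) (V : Matrix (Fin (n₁ + n₂)) (Fin (n₁ + n₂)) ℚ)
    (hV : IsMCTM V) :
    Set.BijOn (fun y => V.mulVec y)
      {y | IsMixedSol (A * V) b y} {x | IsMixedSol A b x} ∧
    (∀ y, IsMixedSol (A * V) b y → IsMixedSol A b (V.mulVec y)) ∧
    (∀ x, IsMixedSol A b x → IsMixedSol (A * V) b (V⁻¹.mulVec x)) := by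
  obtain ⟨hdet, hzero, _hQ, hint, hdetZ⟩ := hV
  have hVV : V * V⁻¹ = 1 := Matrix.mul_nonsing_inv V hdet
  have hVVx : ∀ x, V.mulVec (V⁻¹.mulVec x) = x := by
    intro x; rw [Matrix.mulVec_mulVec, hVV, Matrix.one_mulVec]
  -- integer matrix W whose rational image is the bottom-right block V_Z
  set W : Matrix (Fin n₂) (Fin n₂) ℤ := fun i j => (hint i j).choose with hW
  have hWspec : ∀ i j, V (Fin.natAdd n₁ i) (Fin.natAdd n₁ j) = ((W i j : ℤ) : ℚ) :=
    fun i j => (hint i j).choose_spec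
  have hWmap : W.map (Int.castRingHom ℚ) =
      Matrix.of fun i j : Fin n₂ => V (Fin.natAdd n₁ i) (Fin.natAdd n₁ j) := by
    ext i j; simp [Matrix.map_apply, (hWspec i j).symm]
  have hWdetQ : ((W.det : ℤ) : ℚ) = 1 ∨ ((W.det : ℤ) : ℚ) = -1 := by
    have h1 : (W.map (Int.castRingHom ℚ)).det = ((W.det : ℤ) : ℚ) :=
      (RingHom.map_det (Int.castRingHom ℚ) W).symm
    rw [hWmap] at h1
    rw [← h1]; exact hdetZ
  have hWdet : IsUnit W.det := by
    rcases hWdetQ with h | h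
    · have : W.det = 1 := by exact_mod_cast h
      simp [this]
    · have : W.det = -1 := by exact_mod_cast h
      simp [this]
  have hWW : (W⁻¹.map (Int.castRingHom ℚ)) * (W.map (Int.castRingHom ℚ)) = 1 := by
    rw [← Matrix.map_mul, Matrix.nonsing_inv_mul W hWdet]
    exact Matrix.map_one _ (by simp) (by simp)
  -- forward direction
  have fwd : ∀ y, IsMixedSol (A * V) b y → IsMixedSol A b (V.mulVec y) := by
    rintro y ⟨hle, hintY⟩
    refine ⟨by rwa [Matrix.mulVec_mulVec], ?_⟩
    intro j hj
    have hj2 : (j : ℕ) - n₁ < n₂ := by omega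
    have hjeq : j = Fin.natAdd n₁ ⟨(j : ℕ) - n₁, hj2⟩ := by
      apply Fin.ext; simp [Fin.natAdd]; omega
    set i : Fin n₂ := ⟨(j : ℕ) - n₁, hj2⟩
    have hexp : V.mulVec y j = ∑ k : Fin n₂,
        V (Fin.natAdd n₁ i) (Fin.natAdd n₁ k) * y (Fin.natAdd n₁ k) := by
      rw [hjeq, Matrix.mulVec, dotProduct, Fin.sum_univ_add]
      have h0 : ∀ k : Fin n₁,
          V (Fin.natAdd n₁ i) (Fin.castAdd n₂ k) * y (Fin.castAdd n₂ k) = 0 := by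
        intro k; rw [hzero i k, zero_mul]
      simp [h0]
    rw [hexp]
    apply int_sum_mem
    intro k
    obtain ⟨z, hz⟩ := hintY (Fin.natAdd n₁ k) (by simp [Fin.natAdd])
    exact ⟨W i k * z, by rw [hWspec i k, hz]; push_cast; ring⟩
  -- backward direction
  have bwd : ∀ x, IsMixedSol A b x → IsMixedSol (A * V) b (V⁻¹.mulVec x) := by
    rintro x ⟨hle, hintX⟩
    set y := V⁻¹.mulVec x with hy
    have hVy : V.mulVec y = x := hVVx x
    refine ⟨by rw [← Matrix.mulVec_mulVec, hVy]; exact hle, ?_⟩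
    have hmul : (W.map (Int.castRingHom ℚ)).mulVec (fun k => y (Fin.natAdd n₁ k)) =
        fun i => x (Fin.natAdd n₁ i) := by
      funext i
      have hxi : x (Fin.natAdd n₁ i) = ∑ k : Fin n₂,
          V (Fin.natAdd n₁ i) (Fin.natAdd n₁ k) * y (Fin.natAdd n₁ k) := by
        conv_lhs => rw [← hVy]
        rw [Matrix.mulVec, dotProduct, Fin.sum_univ_add]
        have h0 : ∀ k : Fin n₁,
            V (Fin.natAdd n₁ i) (Fin.castAdd n₂ k) * y (Fin.castAdd n₂ k) = 0 := by
          intro k; rw [hzero i k, zero_mul]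
        simp [h0]
      show ∑ k : Fin n₂, W.map (Int.castRingHom ℚ) i k * y (Fin.natAdd n₁ k)
          = x (Fin.natAdd n₁ i)
      rw [hxi]
      refine Finset.sum_congr rfl fun k _ => ?_
      rw [hWspec i k]; rfl
    have hy'eq : (fun k => y (Fin.natAdd n₁ k)) =
        (W⁻¹.map (Int.castRingHom ℚ)).mulVec (fun i => x (Fin.natAdd n₁ i)) := by
      rw [← hmul, Matrix.mulVec_mulVec, hWW, Matrix.one_mulVec]
    intro j hj
    have hj2 : (j : ℕ) - n₁ < n₂ := by omega
    have hjeq : j = Fin.natAdd n₁ ⟨(j : ℕ) - n₁, hj2⟩ := by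
      apply Fin.ext; simp [Fin.natAdd]; omega
    set i : Fin n₂ := ⟨(j : ℕ) - n₁, hj2⟩
    have hyj : y j = ((W⁻¹.map (Int.castRingHom ℚ)).mulVec
        (fun i => x (Fin.natAdd n₁ i))) i := by
      rw [← hy'eq]; rw [hjeq]
    rw [hyj, Matrix.mulVec, dotProduct]
    apply int_sum_mem
    intro k
    obtain ⟨z, hz⟩ := hintX (Fin.natAdd n₁ k) (by simp [Fin.natAdd])
    refine ⟨W⁻¹ i k * z, ?_⟩
    show W⁻¹.map (Int.castRingHom ℚ) i k * x (Fin.natAdd n₁ k) = _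
    rw [Matrix.map_apply, hz]
    push_cast
    simp [mul_comm]
  refine ⟨⟨fun y hy => fwd y hy, ?_, ?_⟩, fwd, bwd⟩
  · intro y1 h1 y2 h2 heq
    have h3 : V⁻¹.mulVec (V.mulVec y1) = V⁻¹.mulVec (V.mulVec y2) := by
      simp only at heq; rw [heq]
    rwa [Matrix.mulVec_mulVec, Matrix.mulVec_mulVec, Matrix.nonsing_inv_mul V hdet,
      Matrix.one_mulVec, Matrix.one_mulVec] at h3
  · intro x hx
    exact ⟨V⁻¹.mulVec x, bwd x hx, hVVx x⟩
end

section
/- Let A' x ≤ b' be a constraint system with A' ∈ ℚ^{m×n}. Then there exists a partition of its inequalities into two systems A x ≤ b and D x ≤ u with A ∈ ℚ^{m₁×n}, D ∈ ℚ^{m₂×n}, m₁ + m₂ = m, such that: (i) every row of A and every row of D (with its bound) appears as an inequality of A' x ≤ b' and the combined system (A x ≤ b) ∪ (D x ≤ u) has exactly the same rational solutions as A' x ≤ b'; (ii) every row vector d_i of D is bounded in A' x ≤ b' and every row vector a_k of A is unbounded in A' x ≤ b'; and (iii) there exists l ∈ ℚ^{m₂} such that D x ≤ u alone implies l_i ≤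 d_i^T x for every row i (i.e., D x ≤ u is double-bounded, with the lower bounds implied without using A x ≤ b). -/
open Matrix

/-- Direction `h ≠ 0` is bounded in the constraint system `A x ≤ b`: there exist
`l, u ∈ ℚ` such that `A x ≤ b` implies `hᵀ x ≤ u` and `−hᵀ x ≤ −l`. -/
def Bounded {ι : Type} [Fintype ι] {n : ℕ} (A : Matrix ι (Fin n) ℚ) (b : ι → ℚ)
    (h : Fin n → ℚ) : Prop :=
  ∃ l u : ℚ, (∀ x : Fin n → ℚ, A.mulVec x ≤ b → h ⬝ᵥ x ≤ u) ∧
    (∀ x : Fin n → ℚ, A.mulVec x ≤ b → (-h) ⬝ᵥ x ≤ -l)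

/-!
The bounded rows of `A' x ≤ b'` form `D x ≤ u` and the others `A x ≤ b`, so (i) and (ii) hold by
construction. For (iii) let `a_j` be bounded and the system feasible. Farkas' lemma turns the lower
bound on `a_j` into `y ≥ 0` with `yᵀ A' = -a_j`, so `z = y + e_j` is a nonnegative row dependency
`zᵀ A' = 0` with `z_j > 0`. Along such a dependency each row in the support of `z` is bounded below
by the others, `z_s (a_s x) ≥ -∑_{r ≠ s} z_r b_r`. Hence every row in the support is bounded, i.e.
a row of `D`, and the same inequality at `s = j` bounds `a_j` below using `D x ≤ u` alone.
Farkas' lemma is proved over any ordered field by Fourier–Motzkin elimination.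
-/

lemma Finite.exists_between_of_forall_le {α K J : Type*} [LinearOrder α] [Nonempty α] [Finite K]
    [Finite J] {f : K → α} {g : J → α} (h : ∀ k j, f k ≤ g j) :
    ∃ t, (∀ k, f k ≤ t) ∧ ∀ j, t ≤ g j := by
  cases isEmpty_or_nonempty K with
  | inl _ =>
    obtain ⟨t, ht⟩ := (Set.toFinite (Set.range g)).bddBelow
    exact ⟨t, isEmptyElim, fun j => ht ⟨j, rfl⟩⟩
  | inr _ =>
    obtain ⟨k₀, hk₀⟩ := Finite.exists_max f
    exact ⟨f k₀, hk₀, h k₀⟩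

section FourierMotzkin

variable {𝕜 ι κ σ : Type*} [Field 𝕜] [LinearOrder 𝕜]

def IsInfeasibilityCertificate [Fintype ι] (A : Matrix ι σ 𝕜) (b y : ι → 𝕜) : Prop :=
  0 ≤ y ∧ y ᵥ* A = 0 ∧ y ⬝ᵥ b < 0

namespace IsInfeasibilityCertificate

variable [IsStrictOrderedRing 𝕜] [Fintype ι] {A : Matrix ι σ 𝕜} {b y : ι → 𝕜}

theorem not_exists_mulVec_le [Fintype σ] (hy : IsInfeasibilityCertificate A b y) :
    ¬ ∃ x, A *ᵥ x ≤ b := by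
  rintro ⟨x, hx⟩
  have : y ⬝ᵥ A *ᵥ x ≤ y ⬝ᵥ b := dotProduct_le_dotProduct_of_nonneg_left hx hy.1
  rw [dotProduct_mulVec, hy.2.1, zero_dotProduct] at this
  exact this.not_gt hy.2.2

theorem vecMul [Fintype κ] {W : Matrix κ ι 𝕜} (hW : ∀ k i, 0 ≤ W k i) {y : κ → 𝕜}
    (hy : IsInfeasibilityCertificate (W * A) (W *ᵥ b) y) :
    IsInfeasibilityCertificate A b (y ᵥ* W) :=
  ⟨fun i => Finset.sum_nonneg fun k _ => mul_nonneg (hy.1 k) (hW k i),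
    by rw [vecMul_vecMul, hy.2.1], by rw [← dotProduct_mulVec]; exact hy.2.2⟩

end IsInfeasibilityCertificate

abbrev FourierMotzkinIndex (c : ι → 𝕜) : Type _ :=
  {i // c i = 0} ⊕ {p // 0 < c p} × {q // c q < 0}

/-- One step of Fourier–Motzkin elimination of the variable whose column is `c`, as the matrix of
the row combinations it performs. -/
def fourierMotzkin [DecidableEq ι] (c : ι → 𝕜) : Matrix (FourierMotzkinIndex c) ι 𝕜 :=
  Matrix.of <| Sum.elim (fun i => Pi.single i.1 1)
    fun pq => Pi.single pq.1.1 (c pq.1.1)⁻¹ - Pi.single pq.2.1 (c pq.2.1)⁻¹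

variable [DecidableEq ι] {c : ι → 𝕜}

theorem fourierMotzkin_nonneg [IsStrictOrderedRing 𝕜] (k : FourierMotzkinIndex c) (i : ι) :
    0 ≤ fourierMotzkin c k i := by
  rcases k with _ | ⟨p, q⟩ <;>
    simp only [fourierMotzkin, of_apply, Sum.elim_inl, Sum.elim_inr, Pi.sub_apply,
      Pi.single_apply]
  · split_ifs <;> norm_num
  · have := inv_pos.2 p.2
    have := inv_lt_zero.2 q.2
    split_ifs <;> linarith

variable [Fintype ι]

@[simp]
theorem fourierMotzkin_mulVec_inl (v : ι → 𝕜) (i : {i // c i = 0}) :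
    (fourierMotzkin c *ᵥ v) (.inl i) = v i := by
  simp [fourierMotzkin, mulVec]

@[simp]
theorem fourierMotzkin_mulVec_inr (v : ι → 𝕜) (pq : {p // 0 < c p} × {q // c q < 0}) :
    (fourierMotzkin c *ᵥ v) (.inr pq) = (c pq.1)⁻¹ * v pq.1 - (c pq.2)⁻¹ * v pq.2 := by
  simp only [fourierMotzkin, mulVec, of_apply, Sum.elim_inr]
  rw [sub_dotProduct, single_dotProduct, single_dotProduct]

theorem fourierMotzkin_mulVec_self : fourierMotzkin c *ᵥ c = 0 := by
  ext (i | ⟨p, q⟩)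
  · simpa using i.2
  · simp [inv_mul_cancel₀ p.2.ne', inv_mul_cancel₀ q.2.ne]

variable [IsStrictOrderedRing 𝕜]

theorem exists_mul_le_of_nonneg_fourierMotzkin_mulVec {r : ι → 𝕜}
    (hr : 0 ≤ fourierMotzkin c *ᵥ r) : ∃ t, ∀ i, c i * t ≤ r i := by
  obtain ⟨t, hneg, hpos⟩ := Finite.exists_between_of_forall_le
    (f := fun q : {q // c q < 0} => r q / c q) (g := fun p : {p // 0 < c p} => r p / c p)
    fun q p => by
      have := hr (.inr (p, q))
      simp only [Pi.zero_apply, fourierMotzkin_mulVec_inr] at this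
      rw [div_eq_inv_mul, div_eq_inv_mul]
      linarith
  refine ⟨t, fun i => ?_⟩
  rcases lt_trichotomy (c i) 0 with hi | hi | hi
  · rw [mul_comm, ← div_le_iff_of_neg hi]
    exact hneg ⟨i, hi⟩
  · simpa [hi] using hr (.inl ⟨i, hi⟩)
  · rw [mul_comm, ← le_div_iff₀ hi]
    exact hpos ⟨i, hi⟩

theorem exists_mulVec_le_of_fourierMotzkin [Fintype σ] [DecidableEq σ] {A : Matrix ι σ 𝕜}
    {b : ι → 𝕜} (j : σ) {x : σ → 𝕜}
    (hx : (fourierMotzkin (fun i => A i j) * A) *ᵥ x ≤ fourierMotzkin (fun i => A i j) *ᵥ b) :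
    ∃ t, A *ᵥ (x + Pi.single j t) ≤ b := by
  rw [← mulVec_mulVec, ← sub_nonneg, ← mulVec_sub] at hx
  obtain ⟨t, ht⟩ := exists_mul_le_of_nonneg_fourierMotzkin_mulVec hx
  refine ⟨t, fun i => ?_⟩
  have hi : (A *ᵥ (x + Pi.single j t)) i = (A *ᵥ x) i + A i j * t := by
    simp [mulVec_add, mul_comm]
  have := ht i
  rw [Pi.sub_apply] at this
  rw [hi]
  linarith

end FourierMotzkin

section Farkas

variable {𝕜 σ : Type*} [Field 𝕜] [LinearOrder 𝕜] [IsStrictOrderedRing 𝕜]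

theorem exists_isInfeasibilityCertificate_of_forall_notMem_eq_zero [Fintype σ] [DecidableEq σ]
    (S : Finset σ) {ι : Type*} [Fintype ι] [DecidableEq ι] (A : Matrix ι σ 𝕜) (b : ι → 𝕜)
    (hA : ∀ i, ∀ j ∉ S, A i j = 0) (hinf : ¬ ∃ x, A *ᵥ x ≤ b) :
    ∃ y, IsInfeasibilityCertificate A b y := by
  induction S using Finset.induction_on generalizing ι with
  | empty =>
    obtain rfl : A = 0 := by ext i j; exact hA i j (Finset.notMem_empty j)
    obtain ⟨i, hi⟩ : ∃ i, b i < 0 := by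
      by_contra! h
      exact hinf ⟨0, fun i => by simpa using h i⟩
    exact ⟨Pi.single i 1, Pi.single_nonneg.2 zero_le_one, by simp, by simpa using hi⟩
  | insert j S hj ih =>
    set W := fourierMotzkin (fun i => A i j)
    have hWA : ∀ k, ∀ j' ∉ S, (W * A) k j' = 0 := by
      intro k j' hj'
      by_cases hjj' : j' = j
      · subst hjj'
        exact congrFun fourierMotzkin_mulVec_self k
      · simp [Matrix.mul_apply, hA _ j' (by simp [hjj', hj'])]
    obtain ⟨y, hy⟩ := ih (W * A) (W *ᵥ b) hWA fun ⟨_, hx⟩ =>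
      let ⟨_, ht⟩ := exists_mulVec_le_of_fourierMotzkin j hx; hinf ⟨_, ht⟩
    exact ⟨_, hy.vecMul fourierMotzkin_nonneg⟩

theorem not_exists_mulVec_le_iff {ι : Type*} [Fintype ι] [Fintype σ] (A : Matrix ι σ 𝕜)
    (b : ι → 𝕜) : (¬ ∃ x, A *ᵥ x ≤ b) ↔ ∃ y, IsInfeasibilityCertificate A b y := by
  classical
  exact ⟨exists_isInfeasibilityCertificate_of_forall_notMem_eq_zero Finset.univ A b
    (fun _ j hj => absurd (Finset.mem_univ j) hj),
    fun ⟨_, hy⟩ => hy.not_exists_mulVec_le⟩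

theorem exists_nonneg_vecMul_eq_of_forall_dotProduct_le {ι : Type*} [Fintype ι] [Fintype σ]
    {A : Matrix ι σ 𝕜} {b : ι → 𝕜} (hfeas : ∃ x, A *ᵥ x ≤ b) {h : σ → 𝕜} {g : 𝕜}
    (hg : ∀ x, A *ᵥ x ≤ b → h ⬝ᵥ x ≤ g) : ∃ y, 0 ≤ y ∧ y ᵥ* A = h := by
  obtain ⟨y, hy, hyA, hyb⟩ := (not_exists_mulVec_le_iff (fromRows A (of fun _ : Unit => -h))
      (Sum.elim b fun _ => -(g + 1))).1 fun ⟨x, hx⟩ => by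
    rw [fromRows_mulVec] at hx
    have hgx := hg x fun i => hx (.inl i)
    have hx' : (-h) ⬝ᵥ x ≤ -(g + 1) := hx (.inr ())
    rw [neg_dotProduct] at hx'
    linarith
  set y₀ : ι → 𝕜 := fun i => y (.inl i)
  set t := y (.inr ())
  have hy₀A : y₀ ᵥ* A = t • h := by
    rw [vecMul_fromRows, add_eq_zero_iff_eq_neg] at hyA
    rw [show y₀ = y ∘ Sum.inl from rfl, hyA]
    ext j
    simp [vecMul, dotProduct, t]
  have hy₀b : y₀ ⬝ᵥ b < t * (g + 1) := by
    simp only [dotProduct, Fintype.sum_sum_type, Sum.elim_inl, Sum.elim_inr,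
      Finset.univ_unique, Finset.sum_singleton] at hyb
    simp only [dotProduct, y₀, t]
    linarith
  rcases (show 0 ≤ t from hy _).eq_or_lt with ht | ht
  · refine absurd hfeas (IsInfeasibilityCertificate.not_exists_mulVec_le
      ⟨fun i => hy (.inl i), ?_, ?_⟩)
    · rw [hy₀A, ← ht, zero_smul]
    · simpa [← ht] using hy₀b
  · refine ⟨t⁻¹ • y₀, smul_nonneg (inv_nonneg.2 ht.le) fun i => hy (.inl i), ?_⟩
    rw [smul_vecMul, hy₀A, smul_smul, inv_mul_cancel₀ ht.ne', one_smul]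

theorem sub_div_le_mulVec_of_vecMul_eq_zero {ι : Type*} [Fintype ι] [Fintype σ]
    {A : Matrix ι σ 𝕜} {b z : ι → 𝕜} {x : σ → 𝕜} (hz : 0 ≤ z) (hzA : z ᵥ* A = 0)
    (hx : ∀ r, 0 < z r → (A *ᵥ x) r ≤ b r) {s : ι} (hs : 0 < z s) : b s - z ⬝ᵥ b / z s ≤ (A *ᵥ x) s := by
  have hterm : ∀ r, 0 ≤ z r * (b - A *ᵥ x) r := fun r => by
    by_cases hr : z r = 0
    · simp [hr]
    · exact mul_nonneg (hz r) (sub_nonneg.2 (hx r ((hz r).lt_of_ne' hr)))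
  have hsum : z ⬝ᵥ (b - A *ᵥ x) = z ⬝ᵥ b := by
    rw [dotProduct_sub, dotProduct_mulVec, hzA, zero_dotProduct, sub_zero]
  have hs_le : z s * (b - A *ᵥ x) s ≤ z ⬝ᵥ b :=
    hsum ▸ Finset.single_le_sum (fun r _ => hterm r) (Finset.mem_univ s)
  rw [sub_le_comm, le_div_iff₀ hs, mul_comm]
  exact hs_le

end Farkas

section Bounded

variable {ι : Type} [Fintype ι] {n : ℕ} {A : Matrix ι (Fin n) ℚ} {b : ι → ℚ}

theorem bounded_iff {h : Fin n → ℚ} : Bounded A b h ↔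
    (∃ u, ∀ x, A *ᵥ x ≤ b → h ⬝ᵥ x ≤ u) ∧ ∃ l, ∀ x, A *ᵥ x ≤ b → l ≤ h ⬝ᵥ x := by
  simp only [Bounded, neg_dotProduct, neg_le_neg_iff]
  exact ⟨fun ⟨l, u, hu, hl⟩ => ⟨⟨u, hu⟩, l, hl⟩, fun ⟨⟨u, hu⟩, l, hl⟩ => ⟨l, u, hu, hl⟩⟩

theorem bounded_of_not_exists_mulVec_le (hinf : ¬ ∃ x, A *ᵥ x ≤ b) (h : Fin n → ℚ) :
    Bounded A b h :=
  ⟨0, 0, fun x hx => absurd ⟨x, hx⟩ hinf, fun x hx => absurd ⟨x, hx⟩ hinf⟩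

theorem Bounded.exists_le_of_bounded_rows [DecidableEq ι] {j : ι} (hj : Bounded A b (A j)) :
    ∃ l, ∀ x, (∀ r, Bounded A b (A r) → (A *ᵥ x) r ≤ b r) → l ≤ (A *ᵥ x) j := by
  by_cases hfeas : ∃ x, A *ᵥ x ≤ b
  swap
  · exact ⟨0, fun x hx =>
      absurd ⟨x, fun r => hx r (bounded_of_not_exists_mulVec_le hfeas _)⟩ hfeas⟩
  obtain ⟨-, lo, hlo⟩ := bounded_iff.1 hj
  obtain ⟨y, hy, hyA⟩ := exists_nonneg_vecMul_eq_of_forall_dotProduct_le hfeas (h := -A j)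
    (g := -lo) fun x hx => by rw [neg_dotProduct]; exact neg_le_neg (hlo x hx)
  set z := y + Pi.single j 1
  have hz : 0 ≤ z := add_nonneg hy (Pi.single_nonneg.2 zero_le_one)
  have hzA : z ᵥ* A = 0 := by
    rw [add_vecMul, hyA, single_vecMul, one_smul]
    exact neg_add_cancel _
  have hzj : 0 < z j := by simpa [z] using add_pos_of_nonneg_of_pos (hy j) one_pos
  have hsupp : ∀ r, 0 < z r → Bounded A b (A r) := fun r hr => bounded_iff.2
    ⟨⟨b r, fun x hx => hx r⟩, _, fun x hx =>
      sub_div_le_mulVec_of_vecMul_eq_zero hz hzA (fun r _ => hx r) hr⟩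
  exact ⟨_, fun x hx =>
    sub_div_le_mulVec_of_vecMul_eq_zero hz hzA (fun r hr => hx r (hsupp r hr)) hzj⟩

end Bounded

theorem Fin.exists_sum_equiv_partition {m : ℕ} (p : Fin m → Prop) :
    ∃ (m₁ m₂ : ℕ) (e : Fin m₁ ⊕ Fin m₂ ≃ Fin m),
      (∀ i, ¬ p (e (.inl i))) ∧ ∀ i, p (e (.inr i)) := by
  classical
  exact ⟨_, _, (Equiv.sumCongr (Fintype.equivFin _).symm (Fintype.equivFin _).symm).trans
    ((Equiv.sumComm _ _).trans (Equiv.sumCompl p)), fun i => ((Fintype.equivFin _).symm i).2,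
    fun i => ((Fintype.equivFin _).symm i).2⟩

theorem split_equivalence_general {m n : ℕ} (A' : Matrix (Fin m) (Fin n) ℚ) (b' : Fin m → ℚ) :
    ∃ (m₁ m₂ : ℕ) (_ : m₁ + m₂ = m)
      (A : Matrix (Fin m₁) (Fin n) ℚ) (b : Fin m₁ → ℚ)
      (D : Matrix (Fin m₂) (Fin n) ℚ) (u : Fin m₂ → ℚ)
      (e : Fin m₁ ⊕ Fin m₂ ≃ Fin m),
      (∀ i : Fin m₁, A i = A' (e (Sum.inl i)) ∧ b i = b' (e (Sum.inl i))) ∧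
      (∀ i : Fin m₂, D i = A' (e (Sum.inr i)) ∧ u i = b' (e (Sum.inr i))) ∧
      (∀ x : Fin n → ℚ,
        (A.mulVec x ≤ b ∧ D.mulVec x ≤ u) ↔ A'.mulVec x ≤ b') ∧
      (∀ i : Fin m₂, Bounded A' b' (D i)) ∧
      (∀ k : Fin m₁, ¬ Bounded A' b' (A k)) ∧
      (∃ l : Fin m₂ → ℚ, ∀ x : Fin n → ℚ, D.mulVec x ≤ u →
        ∀ i : Fin m₂, l i ≤ D.mulVec x i) := by
  obtain ⟨m₁, m₂, e, hunb, hbdd⟩ := Fin.exists_sum_equiv_partition fun j => Bounded A' b' (A' j)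
  have hm : m₁ + m₂ = m := by simpa using Fintype.card_congr e
  choose l hl using fun i => (hbdd i).exists_le_of_bounded_rows
  refine ⟨m₁, m₂, hm, A'.submatrix (e ∘ .inl) id, b' ∘ e ∘ .inl,
    A'.submatrix (e ∘ .inr) id, b' ∘ e ∘ .inr, e, fun _ => ⟨rfl, rfl⟩,
    fun _ => ⟨rfl, rfl⟩, fun x => ?_, hbdd, hunb, l, fun x hx i => hl i x fun r hr => ?_⟩
  · simp only [Pi.le_def]
    rw [← e.forall_congr_right, Sum.forall]
    rfl
  · obtain ⟨k | k, rfl⟩ := e.surjective r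
    · exact absurd hr (hunb k)
    · exact hx k

/-- Split Equivalence: every constraint system `A' x ≤ b'` (all rows nonzero) can be
partitioned into an unbounded part `A x ≤ b` and a bounded part `D x ≤ u` such that
(i) the rows are exactly the rows of `A' x ≤ b'` and the combined system has the same
rational solutions, (ii) every row of `D` is bounded in `A' x ≤ b'` and every row of
`A` is unbounded in `A' x ≤ b'`, and (iii) `D x ≤ u` alone implies lower bounds
`l ≤ D x`, i.e., it is double-bounded. -/
theorem split_equivalence {m n : ℕ} (A' : Matrix (Fin m) (Fin n) ℚ) (b' : Fin m → ℚ)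
    (hrows : ∀ i : Fin m, A' i ≠ 0) :
    ∃ (m₁ m₂ : ℕ) (_ : m₁ + m₂ = m)
      (A : Matrix (Fin m₁) (Fin n) ℚ) (b : Fin m₁ → ℚ)
      (D : Matrix (Fin m₂) (Fin n) ℚ) (u : Fin m₂ → ℚ)
      (e : Fin m₁ ⊕ Fin m₂ ≃ Fin m),
      (∀ i : Fin m₁, A i = A' (e (Sum.inl i)) ∧ b i = b' (e (Sum.inl i))) ∧
      (∀ i : Fin m₂, D i = A' (e (Sum.inr i)) ∧ u i = b' (e (Sum.inr i))) ∧
      (∀ x : Fin n → ℚ,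
        (A.mulVec x ≤ b ∧ D.mulVec x ≤ u) ↔ A'.mulVec x ≤ b') ∧
      (∀ i : Fin m₂, Bounded A' b' (D i)) ∧
      (∀ k : Fin m₁, ¬ Bounded A' b' (A k)) ∧
      (∃ l : Fin m₂ → ℚ, ∀ x : Fin n → ℚ, D.mulVec x ≤ u →
        ∀ i : Fin m₂, l i ≤ D.mulVec x i) :=
  split_equivalence_general A' b'
end

section
/- Let (A x ≤ b) ∪ (l ≤ D x ≤ u) be a split system with A ∈ ℚ^{m₁×n} and D ∈ ℚ^{m₂×n}. Let s ∈ ℚ^n be a rational solution of the bounded part D x ≤ u, and set g = D s ∈ ℚ^{m₂}. Then the combined system (A x ≤ b) ∪ (D x = g) has a rational solution, i.e., there exists s' ∈ ℚ^n with A s' ≤ b and D s' = g. -/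
/-!
By Farkas' lemma over `ℚ`, which follows from Fourier–Motzkin elimination, if `A x ≤ b, D x = D s`
had no rational solution there would be `y ≥ 0` and `w` with `yᵀA + wᵀD = 0` and
`yᵀb + wᵀD s < 0`. Then `y ≠ 0`, since otherwise `wᵀD s = 0`. For `k` with `y k > 0`, the row
`A k` is bounded above by `b k` on the combined system and also below, because
`y k • A k = -∑_{i ≠ k} y i • A i - wᵀD` and `D x` is double-bounded. This contradicts the
unboundedness of the rows of `A` in a split system.
-/

open Matrix

/-- `(A x ≤ b) ∪ (l ≤ D x ≤ u)` is a split system: all rows are nonzero,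
the part `D x ≤ u` is double-bounded, all nonzero directions are unbounded in
`A x ≤ b`, and every row of `A` is unbounded in the combined system. -/
def SplitSystem {m₁ m₂ n : ℕ} (A : Matrix (Fin m₁) (Fin n) ℚ) (b : Fin m₁ → ℚ)
    (D : Matrix (Fin m₂) (Fin n) ℚ) (u : Fin m₂ → ℚ) : Prop :=
  (∀ i : Fin m₁, A i ≠ 0) ∧ (∀ i : Fin m₂, D i ≠ 0) ∧
  (∃ l : Fin m₂ → ℚ, ∀ x : Fin n → ℚ, D.mulVec x ≤ u → ∀ i : Fin m₂, l i ≤ D.mulVec x i) ∧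
  (∀ h : Fin n → ℚ, h ≠ 0 → ¬ Bounded A b h) ∧
  (∀ i : Fin m₁, ¬ Bounded (Matrix.fromRows A D) (Sum.elim b u) (A i))

theorem exists_between_of_forall_le_of_finite {α β γ : Type*} [Finite α] [Finite β]
    [LinearOrder γ] [Nonempty γ] {L : α → γ} {U : β → γ} (h : ∀ a b, L a ≤ U b) :
    ∃ t, (∀ a, L a ≤ t) ∧ ∀ b, t ≤ U b := by
  cases isEmpty_or_nonempty α with
  | inl _ =>
    obtain ⟨t, ht⟩ := (Set.finite_range U).bddBelow
    exact ⟨t, isEmptyElim, fun b => ht ⟨b, rfl⟩⟩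
  | inr _ =>
    obtain ⟨a₀, ha₀⟩ := Finite.exists_max L
    exact ⟨L a₀, ha₀, h a₀⟩

namespace FourierMotzkin

variable {𝕜 ι : Type*} [Field 𝕜] [LinearOrder 𝕜] {n : ℕ}

/-- Constraints of the system with the first variable eliminated: the rows of `M` whose first
coefficient vanishes, and the pairs of rows whose first coefficients have opposite signs. -/
abbrev Index (M : Matrix ι (Fin (n + 1)) 𝕜) : Type _ :=
  {i // M i 0 = 0} ⊕ {i // 0 < M i 0} × {j // M j 0 < 0}

def combination [DecidableEq ι] (M : Matrix ι (Fin (n + 1)) 𝕜) : Matrix (Index M) ι 𝕜 :=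
  of <| Sum.elim (fun i => Pi.single i.1 1)
    fun p => (-M p.2 0) • Pi.single p.1.1 1 + M p.1.1 0 • Pi.single p.2.1 1

variable [DecidableEq ι] {M : Matrix ι (Fin (n + 1)) 𝕜}

theorem combination_nonneg [IsStrictOrderedRing 𝕜] (k : Index M) (i : ι) :
    0 ≤ combination M k i := by
  have hsingle (j : ι) : 0 ≤ (Pi.single j 1 : ι → 𝕜) := Pi.single_nonneg.2 zero_le_one
  rcases k with k | ⟨p, q⟩
  · exact hsingle k i
  · exact add_nonneg (mul_nonneg (neg_nonneg.2 q.2.le) (hsingle p i))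
      (mul_nonneg p.2.le (hsingle q i))

variable [Fintype ι]

theorem combination_mulVec_inl (v : ι → 𝕜) (i : {i // M i 0 = 0}) :
    (combination M *ᵥ v) (.inl i) = v i := by
  simp [combination, mulVec]

theorem combination_mulVec_inr (v : ι → 𝕜) (p : {i // 0 < M i 0} × {j // M j 0 < 0}) :
    (combination M *ᵥ v) (.inr p) = -M p.2 0 * v p.1 + M p.1 0 * v p.2 := by
  simp only [combination, mulVec, of_apply, Sum.elim_inr, add_dotProduct, smul_dotProduct,
    single_one_dotProduct, smul_eq_mul]

theorem combination_mul_apply_zero (k : Index M) : (combination M * M) k 0 = 0 := by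
  rcases k with k | p
  · exact (combination_mulVec_inl (fun i => M i 0) k).trans k.2
  · exact (combination_mulVec_inr (fun i => M i 0) p).trans (by ring)

variable [IsStrictOrderedRing 𝕜]

theorem exists_cons_mulVec_le {c : ι → 𝕜} {x : Fin n → 𝕜}
    (hx : (combination M * M).submatrix id Fin.succ *ᵥ x ≤ combination M *ᵥ c) :
    ∃ t, M *ᵥ Fin.cons t x ≤ c := by
  have hcons (t : 𝕜) (i : ι) : (M *ᵥ Fin.cons t x) i = M i 0 * t + (M *ᵥ Fin.cons 0 x) i := by
    simp [mulVec, dotProduct, Fin.sum_univ_succ]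
  have hproj : combination M *ᵥ (M *ᵥ Fin.cons 0 x) ≤ combination M *ᵥ c := by
    rw [mulVec_mulVec]
    convert hx using 1
    ext k
    simp [mulVec, dotProduct, Fin.sum_univ_succ]
  set slack := c - M *ᵥ Fin.cons 0 x with hslack
  have hzero (i : {i // M i 0 = 0}) : 0 ≤ slack i := by
    have := hproj (.inl i)
    simp only [combination_mulVec_inl] at this
    simpa [hslack] using this
  have hpair (p : {i // 0 < M i 0}) (q : {j // M j 0 < 0}) :
      slack q / M q 0 ≤ slack p / M p 0 := by
    have := hproj (.inr (p, q))
    simp only [combination_mulVec_inr] at this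
    rw [div_le_iff_of_neg q.2, div_mul_eq_mul_div, div_le_iff₀ p.2]
    simp only [hslack, Pi.sub_apply]
    linarith
  obtain ⟨t, hlow, hup⟩ := exists_between_of_forall_le_of_finite fun q p => hpair p q
  refine ⟨t, fun i => ?_⟩
  rw [hcons]
  have hslack_i : slack i = c i - (M *ᵥ Fin.cons 0 x) i := rfl
  rcases lt_trichotomy (M i 0) 0 with hi | hi | hi
  · have := (div_le_iff_of_neg hi).1 (hlow ⟨i, hi⟩)
    linarith
  · have := hzero ⟨i, hi⟩
    rw [hi]
    linarith
  · have := (le_div_iff₀ hi).1 (hup ⟨i, hi⟩)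
    linarith

theorem exists_vecMul_eq_zero {c : ι → 𝕜} {y : Index M → 𝕜} (hy : 0 ≤ y)
    (hyM : y ᵥ* (combination M * M).submatrix id Fin.succ = 0)
    (hyc : y ⬝ᵥ combination M *ᵥ c < 0) :
    ∃ y : ι → 𝕜, 0 ≤ y ∧ y ᵥ* M = 0 ∧ y ⬝ᵥ c < 0 := by
  refine ⟨y ᵥ* combination M, fun i => Finset.sum_nonneg fun k _ =>
    mul_nonneg (hy k) (combination_nonneg k i), ?_, by rwa [← dotProduct_mulVec]⟩
  rw [vecMul_vecMul]
  ext j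
  refine Fin.cases ?_ (fun j => congrFun hyM j) j
  simp [vecMul, dotProduct, combination_mul_apply_zero]

end FourierMotzkin

section Farkas

variable {𝕜 ι : Type*} [Field 𝕜] [LinearOrder 𝕜] [IsStrictOrderedRing 𝕜] [Fintype ι] {n : ℕ}

open FourierMotzkin in
theorem exists_mulVec_le_or_exists_vecMul_eq_zero (M : Matrix ι (Fin n) 𝕜) (c : ι → 𝕜) :
    (∃ x, M *ᵥ x ≤ c) ∨ ∃ y, 0 ≤ y ∧ y ᵥ* M = 0 ∧ y ⬝ᵥ c < 0 := by
  classical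
  induction n generalizing ι with
  | zero =>
    by_cases hc : 0 ≤ c
    · exact .inl ⟨0, by simpa using hc⟩
    · obtain ⟨i, hi⟩ : ∃ i, c i < 0 := by simpa [Pi.le_def] using hc
      exact .inr ⟨Pi.single i 1, Pi.single_nonneg.2 zero_le_one, Subsingleton.elim _ _,
        by simpa [single_one_dotProduct]⟩
  | succ n ih =>
    rcases ih ((combination M * M).submatrix id Fin.succ) (combination M *ᵥ c) with
      ⟨x, hx⟩ | ⟨y, hy, hyM, hyc⟩
    · obtain ⟨t, ht⟩ := exists_cons_mulVec_le hx
      exact .inl ⟨Fin.cons t x, ht⟩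
    · exact .inr (exists_vecMul_eq_zero hy hyM hyc)

theorem exists_mulVec_le_mulVec_eq_or_exists_vecMul_add_vecMul_eq_zero {κ : Type*} [Fintype κ]
    (A : Matrix ι (Fin n) 𝕜) (b : ι → 𝕜) (D : Matrix κ (Fin n) 𝕜) (g : κ → 𝕜) :
    (∃ x, A *ᵥ x ≤ b ∧ D *ᵥ x = g) ∨
      ∃ y w, 0 ≤ y ∧ y ᵥ* A + w ᵥ* D = 0 ∧ y ⬝ᵥ b + w ⬝ᵥ g < 0 := by
  rcases exists_mulVec_le_or_exists_vecMul_eq_zero (A.fromRows (D.fromRows (-D)))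
    (b ⊕ᵥ (g ⊕ᵥ -g)) with ⟨x, hx⟩ | ⟨y, hy, hyM, hyc⟩
  · simp only [fromRows_mulVec, Sum.elim_le_elim_iff, neg_mulVec, neg_le_neg_iff] at hx
    exact .inl ⟨x, hx.1, le_antisymm hx.2.1 hx.2.2⟩
  · refine .inr ⟨y ∘ .inl, y ∘ .inr ∘ .inl - y ∘ .inr ∘ .inr, fun i => hy _, ?_, ?_⟩
    · rw [vecMul_fromRows, vecMul_fromRows, vecMul_neg] at hyM
      rw [sub_vecMul, ← hyM]
      simp only [Function.comp_assoc]
      abel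
    · rw [← Sum.elim_comp_inl_inr y, ← Sum.elim_comp_inl_inr (y ∘ Sum.inr),
        sumElim_dotProduct_sumElim, sumElim_dotProduct_sumElim] at hyc
      rw [dotProduct_neg] at hyc
      rw [sub_dotProduct]
      simpa only [Function.comp_assoc, sub_eq_add_neg, add_assoc] using hyc

end Farkas

theorem dotProduct_le_sum_max_of_le_of_le {κ R : Type*} [Fintype κ] [CommRing R] [LinearOrder R]
    [IsStrictOrderedRing R] {w l z u : κ → R} (hl : l ≤ z) (hu : z ≤ u) :
    w ⬝ᵥ z ≤ ∑ i, max (w i * l i) (w i * u i) :=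
  Finset.sum_le_sum fun i _ => by
    rcases le_total 0 (w i) with hw | hw
    · exact le_max_of_le_right (mul_le_mul_of_nonneg_left (hu i) hw)
    · exact le_max_of_le_left (mul_le_mul_of_nonpos_left (hl i) hw)

theorem bounded_fromRows_row_of_vecMul_add_vecMul_eq_zero {ι κ : Type} [Fintype ι] [Fintype κ]
    {n : ℕ} {A : Matrix ι (Fin n) ℚ} {b : ι → ℚ} {D : Matrix κ (Fin n) ℚ} {l u : κ → ℚ}
    (hl : ∀ x, D *ᵥ x ≤ u → l ≤ D *ᵥ x) {y : ι → ℚ} {w : κ → ℚ} (hy : 0 ≤ y)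
    (hyw : y ᵥ* A + w ᵥ* D = 0) {k : ι} (hk : 0 < y k) :
    Bounded (A.fromRows D) (b ⊕ᵥ u) (A k) := by
  set B := ∑ i, max (w i * l i) (w i * u i)
  refine ⟨b k - (y ⬝ᵥ b + B) / y k, b k, fun x hx => ?_, fun x hx => ?_⟩ <;>
    rw [fromRows_mulVec, Sum.elim_le_elim_iff] at hx <;> obtain ⟨hAx, hDx⟩ := hx
  · exact hAx k
  have hslack : y k * (b k - (A *ᵥ x) k) ≤ y ⬝ᵥ (b - A *ᵥ x) :=
    Finset.single_le_sum (f := fun i => y i * (b - A *ᵥ x) i)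
      (fun i _ => mul_nonneg (hy i) (sub_nonneg.2 (hAx i))) (Finset.mem_univ k)
  have hcancel : y ⬝ᵥ A *ᵥ x + w ⬝ᵥ D *ᵥ x = 0 := by
    rw [dotProduct_mulVec, dotProduct_mulVec, ← add_dotProduct, hyw, zero_dotProduct]
  have hD : w ⬝ᵥ D *ᵥ x ≤ B := dotProduct_le_sum_max_of_le_of_le (hl x hDx) hDx
  have : b k - (A *ᵥ x) k ≤ (y ⬝ᵥ b + B) / y k := by
    rw [dotProduct_sub] at hslack
    rw [le_div_iff₀ hk]
    linarith
  rw [neg_dotProduct, neg_le_neg_iff]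
  exact sub_le_comm.1 this

theorem rational_extension_general {m₁ m₂ n : ℕ} (A : Matrix (Fin m₁) (Fin n) ℚ)
    (b : Fin m₁ → ℚ) (D : Matrix (Fin m₂) (Fin n) ℚ) (u : Fin m₂ → ℚ)
    (hsplit : SplitSystem A b D u)
    (s : Fin n → ℚ) :
    ∃ s' : Fin n → ℚ, A.mulVec s' ≤ b ∧ D.mulVec s' = D.mulVec s := by
  obtain ⟨-, -, ⟨l, hl⟩, -, hunbounded⟩ := hsplit
  refine (exists_mulVec_le_mulVec_eq_or_exists_vecMul_add_vecMul_eq_zero A b D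
    (D *ᵥ s)).resolve_right ?_
  rintro ⟨y, w, hy, hyw, hneg⟩
  obtain ⟨k, hk⟩ : ∃ k, 0 < y k := by
    by_contra! hy0
    obtain rfl : y = 0 := le_antisymm hy0 hy
    rw [zero_vecMul, zero_add] at hyw
    rw [zero_dotProduct, zero_add, dotProduct_mulVec, hyw, zero_dotProduct] at hneg
    exact hneg.false
  exact hunbounded k (bounded_fromRows_row_of_vecMul_add_vecMul_eq_zero hl hy hyw hk)

/-- Rational Extension: in a split system, if `s` is a rational solution of the
bounded part `D x ≤ u` and `g = D s`, then `(A x ≤ b) ∪ (D x = g)` has a rational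
solution. -/
theorem rational_extension {m₁ m₂ n : ℕ} (A : Matrix (Fin m₁) (Fin n) ℚ)
    (b : Fin m₁ → ℚ) (D : Matrix (Fin m₂) (Fin n) ℚ) (u : Fin m₂ → ℚ)
    (hsplit : SplitSystem A b D u)
    (s : Fin n → ℚ) (hs : D.mulVec s ≤ u) :
    ∃ s' : Fin n → ℚ, A.mulVec s' ≤ b ∧ D.mulVec s' = D.mulVec s :=
  rational_extension_general A b D u hsplit s
end

section
/- Let (A x ≤ b) ∪ (l ≤ D x ≤ u) be a split system with A ∈ ℚ^{m₁×n} and D ∈ ℚ^{m₂×n}. Let s ∈ ℚ^n be a rational solution of D x ≤ u and set g = D s ∈ ℚ^{m₂}. Then every row vector a_i of A is still an unbounded direction in the combined system (A x ≤ b) ∪ (D x = g), where D x = g is treated as the inequalities D x ≤ g together with −D x ≤ −g. -/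
open Matrix

/-!
Each row `a_j` of `A` is unbounded below on the combined system, so by Farkas' lemma it strictly
decreases along a recession direction `r_j` (`A r_j ≤ 0`, `D r_j ≤ 0`); as `D` is bounded below
on `D x ≤ u`, in fact `D r_j = 0`. The sum `r = ∑ r_j` then has `A r < 0` and `D r = 0`, so
along `s + t r` the equations `D x = D s` hold, `A x ≤ b` holds for large `t`, and
`a_i x → -∞`.
-/

open Filter

section Farkas

variable {𝕜 V : Type*} [Field 𝕜] [AddCommGroup V] [Module 𝕜 V]

lemma LinearMap.comp_id_sub_smulRight (φ d : V →ₗ[𝕜] 𝕜) (r : V) :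
    φ.comp (LinearMap.id - d.smulRight r) = φ - φ r • d := by
  ext v
  simp [mul_comm]

variable [LinearOrder 𝕜] [IsStrictOrderedRing 𝕜]

theorem LinearMap.exists_nonneg_eq_sum_smul_of_forall_nonpos {ι : Type*} (s : Finset ι) :
    ∀ (f : ι → V →ₗ[𝕜] 𝕜) (g : V →ₗ[𝕜] 𝕜), (∀ v, (∀ i ∈ s, f i v ≤ 0) → g v ≤ 0) →
      ∃ y : ι → 𝕜, (∀ i, 0 ≤ y i) ∧ g = ∑ i ∈ s, y i • f i := by
  classical
  induction s using Finset.induction_on with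
  | empty =>
    intro f g hg
    refine ⟨0, fun _ => le_rfl, LinearMap.ext fun v => le_antisymm (hg v (by simp)) ?_⟩
    simpa using hg (-v) (by simp)
  | insert a s ha ih =>
    intro f g hg
    suffices ∃ β : 𝕜, 0 ≤ β ∧ ∃ y : ι → 𝕜, (∀ i, 0 ≤ y i) ∧ g - β • f a = ∑ i ∈ s, y i • f i by
      obtain ⟨β, hβ, y, hy, hyg⟩ := this
      refine ⟨Function.update y a β, fun i => ?_, ?_⟩
      · rcases eq_or_ne i a with rfl | hia <;> simp [*]
      rw [Finset.sum_insert ha, Function.update_self, ← sub_eq_iff_eq_add', hyg]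
      exact Finset.sum_congr rfl fun i hi => by
        rw [Function.update_of_ne (ne_of_mem_of_not_mem hi ha)]
    by_cases hs : ∀ v, (∀ i ∈ s, f i v ≤ 0) → g v ≤ 0
    · exact ⟨0, le_rfl, by simpa using ih f g hs⟩
    -- otherwise some `r` with `f a r = 1` separates `g` from the cone of the `f i`, `i ∈ s`;
    -- projecting along `r` removes `f a` and reduces to the induction hypothesis
    push Not at hs
    obtain ⟨r₀, hr₀s, hr₀g⟩ := hs
    have hr₀a : 0 < f a r₀ := by
      by_contra! h
      exact (hg r₀ (Finset.forall_mem_insert _ _ _ |>.2 ⟨h, hr₀s⟩)).not_gt hr₀g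
    set r := (f a r₀)⁻¹ • r₀
    have hra : f a r = 1 := by simp [r, hr₀a.ne']
    have hrs : ∀ i ∈ s, f i r ≤ 0 := fun i hi => by
      simpa [r] using mul_nonpos_of_nonneg_of_nonpos (inv_nonneg.2 hr₀a.le) (hr₀s i hi)
    have hrg : 0 < g r := by simpa [r] using mul_pos (inv_pos.2 hr₀a) hr₀g
    set P : V →ₗ[𝕜] V := LinearMap.id - (f a).smulRight r
    obtain ⟨y, hy, hyg⟩ := ih (fun i => (f i).comp P) (g.comp P) fun v hv =>
      hg (P v) (Finset.forall_mem_insert _ _ _ |>.2 ⟨by simp [P, hra], hv⟩)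
    have hsum : ∑ i ∈ s, y i * f i r ≤ 0 :=
      Finset.sum_nonpos fun i hi => mul_nonpos_of_nonneg_of_nonpos (hy i) (hrs i hi)
    refine ⟨g r - ∑ i ∈ s, y i * f i r, by linarith, y, hy, ?_⟩
    simp only [P, comp_id_sub_smulRight, smul_sub, Finset.sum_sub_distrib, smul_smul,
      ← Finset.sum_smul] at hyg
    linear_combination (norm := module) hyg

end Farkas

section Polyhedra

variable {𝕜 : Type*} [Field 𝕜] [LinearOrder 𝕜] [IsStrictOrderedRing 𝕜]

lemma Filter.tendsto_const_add_mul_atBot {a c : 𝕜} (hc : c < 0) :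
    Tendsto (fun t : 𝕜 => a + t * c) atTop atBot :=
  tendsto_atBot_add_const_left _ a (tendsto_id.atTop_mul_const_of_neg hc)

lemma eq_zero_of_forall_le_add_mul {a c l : 𝕜} (hc : c ≤ 0) (h : ∀ t, 0 ≤ t → l ≤ a + t * c) :
    c = 0 := by
  refine hc.eq_or_lt.resolve_right fun hc => ?_
  obtain ⟨t, ht, htl⟩ := ((eventually_ge_atTop 0).and
    ((tendsto_const_add_mul_atBot (a := a) hc).eventually_lt_atBot l)).exists
  exact (h t ht).not_gt htl

theorem Matrix.exists_mulVec_nonpos_dotProduct_neg {ι σ : Type*} [Fintype ι] [Fintype σ]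
    (M : Matrix ι σ 𝕜) (c : ι → 𝕜) (h : σ → 𝕜) (hunb : ∀ L, ∃ x, M *ᵥ x ≤ c ∧ h ⬝ᵥ x < L) :
    ∃ r, M *ᵥ r ≤ 0 ∧ h ⬝ᵥ r < 0 := by
  -- otherwise `-h` is a nonnegative combination `∑ yᵢ Mᵢ`, and `h ⬝ᵥ x ≥ -∑ yᵢ cᵢ` on `M x ≤ c`
  by_contra! hr
  obtain ⟨y, hy, hyh⟩ := LinearMap.exists_nonneg_eq_sum_smul_of_forall_nonpos Finset.univ
    (fun i => dotProductBilin 𝕜 𝕜 (M i)) (dotProductBilin 𝕜 𝕜 (-h)) fun r hr' => by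
      simpa using hr r fun i => hr' i (Finset.mem_univ i)
  obtain ⟨x, hx, hxL⟩ := hunb (-∑ i, y i * c i)
  have hbound : -h ⬝ᵥ x ≤ ∑ i, y i * c i := by
    rw [← dotProductBilin_apply_apply (R := 𝕜) (S := 𝕜), hyh]
    simp only [LinearMap.coe_sum, Finset.sum_apply, LinearMap.smul_apply,
      dotProductBilin_apply_apply, smul_eq_mul]
    exact Finset.sum_le_sum fun i _ => mul_le_mul_of_nonneg_left (hx i) (hy i)
  rw [neg_dotProduct] at hbound
  linarith

end Polyhedra

lemma not_bounded_row_iff {ι : Type} [Fintype ι] {n : ℕ} {M : Matrix ι (Fin n) ℚ} {c : ι → ℚ}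
    {i : ι} : ¬ Bounded M c (M i) ↔ ∀ l, ∃ x, M *ᵥ x ≤ c ∧ M i ⬝ᵥ x < l := by
  have hbounded : Bounded M c (M i) ↔ ∃ l, ∀ x, M *ᵥ x ≤ c → l ≤ M i ⬝ᵥ x := by
    refine ⟨fun ⟨l, _, _, hl⟩ => ⟨l, fun x hx => ?_⟩, fun ⟨l, hl⟩ => ⟨l, c i, fun x hx => hx i,
      fun x hx => ?_⟩⟩
    · simpa using hl x hx
    · simpa using hl x hx
  simp only [hbounded, not_exists, not_forall, not_le, exists_prop]

section SplitSystem

variable {m₁ m₂ n : ℕ} {A : Matrix (Fin m₁) (Fin n) ℚ} {b : Fin m₁ → ℚ}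
  {D : Matrix (Fin m₂) (Fin n) ℚ} {u : Fin m₂ → ℚ}

lemma SplitSystem.exists_mulVec_eq_zero_dotProduct_neg (hsplit : SplitSystem A b D u)
    (j : Fin m₁) : ∃ r, A *ᵥ r ≤ 0 ∧ D *ᵥ r = 0 ∧ A j ⬝ᵥ r < 0 := by
  obtain ⟨-, -, ⟨l, hl⟩, -, hunb⟩ := hsplit
  have hj := (not_bounded_row_iff (M := fromRows A D) (i := Sum.inl j)).1 (hunb j)
  obtain ⟨r, hr, hrj⟩ := exists_mulVec_nonpos_dotProduct_neg _ _ _ hj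
  rw [fromRows_mulVec, ← Sum.elim_zero_zero, Sum.elim_le_elim_iff] at hr
  obtain ⟨x₀, hx₀, -⟩ := hj 0
  rw [fromRows_mulVec, Sum.elim_le_elim_iff] at hx₀
  -- `D` is bounded below on `D x ≤ u`, so the ray `x₀ + t r` cannot decrease any row of `D`
  refine ⟨r, hr.1, funext fun k =>
    eq_zero_of_forall_le_add_mul (a := (D *ᵥ x₀) k) (l := l k) (hr.2 k) fun t ht => ?_, hrj⟩
  have hray : D *ᵥ (x₀ + t • r) ≤ u := fun k' => by
    simpa [mulVec_add, mulVec_smul] using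
      add_le_of_le_of_nonpos (hx₀.2 k') (mul_nonpos_of_nonneg_of_nonpos ht (hr.2 k'))
  simpa [mulVec_add, mulVec_smul] using hl _ hray k

lemma SplitSystem.exists_mulVec_neg_mulVec_eq_zero (hsplit : SplitSystem A b D u) :
    ∃ r, (∀ j, (A *ᵥ r) j < 0) ∧ D *ᵥ r = 0 := by
  choose r hrA hrD hrj using hsplit.exists_mulVec_eq_zero_dotProduct_neg
  refine ⟨∑ j, r j, fun j => ?_, by simp [mulVec_sum, hrD]⟩
  rw [mulVec_sum, Finset.sum_apply]
  calc ∑ k, (A *ᵥ r k) j < ∑ _k : Fin m₁, 0 :=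
        Finset.sum_lt_sum (fun k _ => hrA k j) ⟨j, Finset.mem_univ j, hrj j⟩
    _ = 0 := Finset.sum_const_zero

end SplitSystem

theorem persistence_of_unboundedness_general {m₁ m₂ n : ℕ} (A : Matrix (Fin m₁) (Fin n) ℚ)
    (b : Fin m₁ → ℚ) (D : Matrix (Fin m₂) (Fin n) ℚ) (u : Fin m₂ → ℚ)
    (hsplit : SplitSystem A b D u)
    (s : Fin n → ℚ) :
    ∀ i : Fin m₁,
      ¬ Bounded (Matrix.fromRows A (Matrix.fromRows D (-D)))
        (Sum.elim b (Sum.elim (D.mulVec s) (-(D.mulVec s)))) (A i) := by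
  intro i
  obtain ⟨r, hAr, hDr⟩ := hsplit.exists_mulVec_neg_mulVec_eq_zero
  refine (not_bounded_row_iff (i := Sum.inl i)).2 fun L => ?_
  have hray : ∀ j, Tendsto (fun t : ℚ => (A *ᵥ (s + t • r)) j) atTop atBot := fun j => by
    simpa [mulVec_add, mulVec_smul] using tendsto_const_add_mul_atBot (a := (A *ᵥ s) j) (hAr j)
  obtain ⟨t, hb, hL⟩ := ((eventually_all.2 fun j => (hray j).eventually_le_atBot (b j)).and
    ((hray i).eventually_lt_atBot L)).exists
  refine ⟨s + t • r, ?_, hL⟩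
  have hD : D *ᵥ (s + t • r) = D *ᵥ s := by rw [mulVec_add, mulVec_smul, hDr, smul_zero, add_zero]
  rw [fromRows_mulVec, fromRows_mulVec, neg_mulVec, hD]
  exact Sum.elim_le_elim_iff.2 ⟨hb, le_rfl⟩

/-- Persistence of Unboundedness: in a split system, if `s` is a rational solution
of `D x ≤ u` and `g = D s`, then every row `aᵢ` of `A` is still unbounded in the
combined system `(A x ≤ b) ∪ (D x = g)`, where `D x = g` stands for the
inequalities `D x ≤ g` together with `−D x ≤ −g`. -/
theorem persistence_of_unboundedness {m₁ m₂ n : ℕ} (A : Matrix (Fin m₁) (Fin n) ℚ)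
    (b : Fin m₁ → ℚ) (D : Matrix (Fin m₂) (Fin n) ℚ) (u : Fin m₂ → ℚ)
    (hsplit : SplitSystem A b D u)
    (s : Fin n → ℚ) (hs : D.mulVec s ≤ u) :
    ∀ i : Fin m₁,
      ¬ Bounded (Matrix.fromRows A (Matrix.fromRows D (-D)))
        (Sum.elim b (Sum.elim (D.mulVec s) (-(D.mulVec s)))) (A i) :=
  persistence_of_unboundedness_general A b D u hsplit s
end

section
/- Let (A x ≤ b) ∪ (l ≤ D x ≤ u) be a split system with A ∈ ℚ^{m₁×n}, D ∈ ℚ^{m₂×n}, and n = n₁ + n₂. If the bounded part D x ≤ u has a mixed solution s (s ∈ ℚ^n with D s ≤ u and s_j ∈ ℤ for j > n₁), then the full system (A x ≤ b) ∪ (D x ≤ u) has a mixed solution s', i.e., there exists s' ∈ ℚ^n with A s' ≤ b, D s' ≤ u, and s'_j ∈ ℤ for j > n₁. -/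
/-!
Each row `aᵢ` of `A` is unbounded below on the combined polyhedron, so Farkas' lemma yields a
recession direction `z` of the combined system with `aᵢ ⬝ z < 0`; here Farkas' lemma is proved by
Fourier–Motzkin elimination. Summing these directions and clearing denominators gives an integral
`z` with `A z < 0` and `D z ≤ 0`. Then `s + t z` stays a mixed solution of `D x ≤ u` for every
`t ∈ ℕ`, and satisfies `A x ≤ b` once `t` is large.
-/

open Matrix

open Filter Set

section Farkas

variable {𝕜 V ι : Type*} [Field 𝕜] [LinearOrder 𝕜] [IsStrictOrderedRing 𝕜]
  [AddCommGroup V] [Module 𝕜 V]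

theorem mem_hull_insert_of_nonpos_imp_nonpos
    (ih : ∀ (f : ι → Module.Dual 𝕜 V) (g : Module.Dual 𝕜 V),
      (∀ x, (∀ i, f i x ≤ 0) → g x ≤ 0) → g ∈ PointedCone.hull 𝕜 (range f))
    (a : Module.Dual 𝕜 V) (f : ι → Module.Dual 𝕜 V) {g : Module.Dual 𝕜 V}
    (h : ∀ x, a x ≤ 0 → (∀ i, f i x ≤ 0) → g x ≤ 0) :
    g ∈ PointedCone.hull 𝕜 (insert a (range f)) := by
  by_cases hw : ∃ w, (∀ i, f i w ≤ 0) ∧ 0 < g w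
  swap
  · push Not at hw
    exact Submodule.span_mono (subset_insert _ _) (ih f g hw)
  obtain ⟨w, hfw, hgw⟩ := hw
  have haw : 0 < a w := by
    by_contra! haw
    exact (h w haw hfw).not_gt hgw
  -- Fourier–Motzkin elimination of `a`: `π φ` is `φ` composed with the projection along `w`
  -- onto `ker a`, on which the constraint `a ≤ 0` is vacuous.
  set π : Module.Dual 𝕜 V → Module.Dual 𝕜 V := fun φ => φ - (φ w / a w) • a
  have hπ : ∀ φ x, π φ x = φ (x - (a x / a w) • w) := fun φ x => by
    simp only [π, LinearMap.sub_apply, LinearMap.smul_apply, map_sub, map_smul, smul_eq_mul]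
    field_simp
  have hπg : π g ∈ PointedCone.hull 𝕜 (range (π ∘ f)) := ih _ _ fun x hx => by
    rw [hπ]
    refine h _ (by simp [haw.ne']) fun i => ?_
    simpa only [Function.comp_apply, hπ] using hx i
  have hmem : ∀ {φ}, φ ∈ insert a (range f) → φ ∈ PointedCone.hull 𝕜 (insert a (range f)) :=
    fun hφ => Submodule.subset_span hφ
  have hπf : PointedCone.hull 𝕜 (range (π ∘ f)) ≤ PointedCone.hull 𝕜 (insert a (range f)) := by
    refine Submodule.span_le.2 ?_
    rintro _ ⟨i, rfl⟩
    have hc : 0 ≤ -(f i w / a w) := neg_nonneg.2 (div_nonpos_of_nonpos_of_nonneg (hfw i) haw.le)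
    simpa [π, sub_eq_add_neg, neg_smul] using add_mem (hmem (mem_insert_of_mem _ ⟨i, rfl⟩))
      (PointedCone.smul_mem _ hc (hmem (mem_insert a _)))
  have hg : g = π g + (g w / a w) • a := by simp [π]
  rw [hg]
  exact add_mem (hπf hπg) (PointedCone.smul_mem _ (div_pos hgw haw).le (hmem (mem_insert a _)))

theorem mem_hull_range_of_nonpos_imp_nonpos [Finite ι] (f : ι → Module.Dual 𝕜 V)
    {g : Module.Dual 𝕜 V} (h : ∀ x, (∀ i, f i x ≤ 0) → g x ≤ 0) :
    g ∈ PointedCone.hull 𝕜 (range f) := by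
  obtain ⟨m, ⟨e⟩⟩ := Finite.exists_equiv_fin ι
  rw [← EquivLike.range_comp f e.symm]
  replace h : ∀ x, (∀ i, (f ∘ e.symm) i x ≤ 0) → g x ≤ 0 :=
    fun x hx => h x fun i => by simpa using hx (e i)
  generalize f ∘ e.symm = f at h ⊢
  clear e
  induction m generalizing g with
  | zero =>
    have hg : g = 0 := LinearMap.ext fun x =>
      le_antisymm (h x finZeroElim) (by simpa using h (-x) finZeroElim)
    exact hg ▸ zero_mem _
  | succ m ih =>
    rw [← Fin.cons_self_tail f, Fin.range_cons]
    exact mem_hull_insert_of_nonpos_imp_nonpos (fun f' g' => ih f') (f 0) (Fin.tail f)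
      fun x ha hf => h x (Fin.cases ha hf)

theorem bddAbove_image_of_mem_hull {f : ι → Module.Dual 𝕜 V} {d : ι → 𝕜}
    {g : Module.Dual 𝕜 V} (hg : g ∈ PointedCone.hull 𝕜 (range f)) :
    BddAbove (g '' {x | ∀ i, f i x ≤ d i}) := by
  simp only [bddAbove_def, forall_mem_image]
  induction hg using Submodule.span_induction with
  | mem _ hφ =>
    obtain ⟨i, rfl⟩ := hφ
    exact ⟨d i, fun x hx => hx i⟩
  | zero => exact ⟨0, fun _ _ => le_rfl⟩
  | add φ ψ _ _ hφ hψ =>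
    obtain ⟨β, hβ⟩ := hφ
    obtain ⟨γ, hγ⟩ := hψ
    exact ⟨β + γ, fun x hx => add_le_add (hβ hx) (hγ hx)⟩
  | smul c φ _ hφ =>
    obtain ⟨β, hβ⟩ := hφ
    exact ⟨c * β, fun x hx => mul_le_mul_of_nonneg_left (hβ hx) c.2⟩

end Farkas

section Matrix

variable {𝕜 ι n : Type*} [Field 𝕜] [LinearOrder 𝕜] [IsStrictOrderedRing 𝕜] [Fintype ι] [Fintype n]

theorem exists_mulVec_nonpos_of_not_bddBelow {M : Matrix ι n 𝕜} {d : ι → 𝕜} {c : n → 𝕜}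
    (h : ¬ BddBelow ((c ⬝ᵥ ·) '' {x | M *ᵥ x ≤ d})) : ∃ z, M *ᵥ z ≤ 0 ∧ c ⬝ᵥ z < 0 := by
  by_contra! hc
  let row (v : n → 𝕜) : Module.Dual 𝕜 (n → 𝕜) := dotProductBilin 𝕜 𝕜 v
  have hneg : row (-c) ∈ PointedCone.hull 𝕜 (range fun i => row (M i)) :=
    mem_hull_range_of_nonpos_imp_nonpos _ fun z hz => by
      simpa [row] using hc z hz
  obtain ⟨β, hβ⟩ := bddAbove_image_of_mem_hull (d := d) hneg
  refine h ⟨-β, ?_⟩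
  rintro _ ⟨x, hx, rfl⟩
  exact neg_le.2 (by simpa [row] using hβ ⟨x, hx, rfl⟩)

end Matrix

theorem exists_nat_mul_eq_intCast {ι : Type*} [Fintype ι] (v : ι → ℚ) :
    ∃ N : ℕ, 0 < N ∧ ∀ j, ∃ k : ℤ, N * v j = k := by
  refine ⟨∏ j, (v j).den, Finset.prod_pos fun j _ => (v j).pos, fun j => ?_⟩
  obtain ⟨c, hc⟩ := Finset.dvd_prod_of_mem (fun j => (v j).den) (Finset.mem_univ j)
  exact ⟨c * (v j).num, by rw [hc]; push_cast; rw [← Rat.den_mul_eq_num]; ring⟩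

section Rays

variable {𝕜 ι κ n : Type*} [Field 𝕜] [LinearOrder 𝕜] [IsStrictOrderedRing 𝕜] [Fintype n]

theorem exists_forall_mulVec_neg [Fintype ι] {A : Matrix ι n 𝕜} {D : Matrix κ n 𝕜}
    (h : ∀ i, ∃ z, A *ᵥ z ≤ 0 ∧ D *ᵥ z ≤ 0 ∧ (A *ᵥ z) i < 0) :
    ∃ z, (∀ i, (A *ᵥ z) i < 0) ∧ D *ᵥ z ≤ 0 := by
  choose z hA hD hi using h
  refine ⟨∑ i, z i, fun j => ?_, fun k => ?_⟩
  · rw [mulVec_sum, Finset.sum_apply]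
    exact Finset.sum_neg' (fun i _ => hA i j) ⟨j, Finset.mem_univ j, hi j⟩
  · rw [mulVec_sum, Finset.sum_apply]
    exact Finset.sum_nonpos fun i _ => hD i k

theorem mulVec_add_smul_le {M : Matrix ι n 𝕜} {d : ι → 𝕜} {x z : n → 𝕜} {t : 𝕜}
    (hx : M *ᵥ x ≤ d) (hz : M *ᵥ z ≤ 0) (ht : 0 ≤ t) : M *ᵥ (x + t • z) ≤ d := by
  rw [mulVec_add, mulVec_smul]
  exact add_le_of_le_of_nonpos hx (smul_nonpos_of_nonneg_of_nonpos ht hz)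

theorem eventually_mulVec_add_smul_le [Archimedean 𝕜] [Fintype ι] {M : Matrix ι n 𝕜} (d : ι → 𝕜)
    (x : n → 𝕜) {z : n → 𝕜} (hz : ∀ i, (M *ᵥ z) i < 0) :
    ∀ᶠ t : ℕ in atTop, M *ᵥ (x + (t : 𝕜) • z) ≤ d := by
  refine eventually_all.2 fun i => ?_
  have : Tendsto (fun t : ℕ => (M *ᵥ x) i + t * (M *ᵥ z) i) atTop atBot :=
    tendsto_atBot_add_const_left _ _ (tendsto_natCast_atTop_atTop.atTop_mul_const_of_neg (hz i))
  simpa [mulVec_add, mulVec_smul] using this.eventually_le_atBot (d i)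

theorem exists_int_forall_mulVec_neg {A : Matrix ι n ℚ} {D : Matrix κ n ℚ}
    (h : ∃ z, (∀ i, (A *ᵥ z) i < 0) ∧ D *ᵥ z ≤ 0) :
    ∃ z : n → ℤ, (∀ i, (A *ᵥ ((↑) ∘ z)) i < 0) ∧ D *ᵥ ((↑) ∘ z) ≤ 0 := by
  obtain ⟨z, hA, hD⟩ := h
  obtain ⟨N, hN, hz⟩ := exists_nat_mul_eq_intCast z
  choose k hk using hz
  have hkz : ((↑) ∘ k : n → ℚ) = (N : ℚ) • z := funext fun j => (hk j).symm
  refine ⟨k, fun i => ?_, ?_⟩ <;> rw [hkz, mulVec_smul]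
  · exact mul_neg_of_pos_of_neg (Nat.cast_pos.2 hN) (hA i)
  · exact smul_nonpos_of_nonneg_of_nonpos (Nat.cast_nonneg N) hD

end Rays

theorem not_bddBelow_of_not_bounded {ι : Type} [Fintype ι] {n : ℕ} {M : Matrix ι (Fin n) ℚ}
    {d : ι → ℚ} {h : Fin n → ℚ} {β : ℚ} (hβ : ∀ x, M *ᵥ x ≤ d → h ⬝ᵥ x ≤ β)
    (hh : ¬ Bounded M d h) : ¬ BddBelow ((h ⬝ᵥ ·) '' {x | M *ᵥ x ≤ d}) := by
  rintro ⟨l, hl⟩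
  exact hh ⟨l, β, hβ, fun x hx => by simpa using hl ⟨x, hx, rfl⟩⟩

theorem exists_ray_of_not_bounded {m₁ m₂ n : ℕ} {A : Matrix (Fin m₁) (Fin n) ℚ} {b : Fin m₁ → ℚ}
    {D : Matrix (Fin m₂) (Fin n) ℚ} {u : Fin m₂ → ℚ} {i : Fin m₁}
    (h : ¬ Bounded (fromRows A D) (Sum.elim b u) (A i)) :
    ∃ z, A *ᵥ z ≤ 0 ∧ D *ᵥ z ≤ 0 ∧ (A *ᵥ z) i < 0 := by
  have hb : ∀ x, fromRows A D *ᵥ x ≤ Sum.elim b u → A i ⬝ᵥ x ≤ b i := fun x hx =>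
    hx (Sum.inl i)
  obtain ⟨z, hz, hiz⟩ := exists_mulVec_nonpos_of_not_bddBelow (not_bddBelow_of_not_bounded hb h)
  rw [fromRows_mulVec, ← Sum.elim_zero_zero, Sum.elim_le_elim_iff] at hz
  exact ⟨z, hz.1, hz.2, hiz⟩

/-- Mixed Extension: in a split system over `n = n₁ + n₂` variables (the last `n₂`
being integer), if the bounded part `D x ≤ u` has a mixed solution `s`, then the
full system `(A x ≤ b) ∪ (D x ≤ u)` has a mixed solution `s'`. -/
theorem mixed_extension {m₁ m₂ n₁ n₂ : ℕ}
    (A : Matrix (Fin m₁) (Fin (n₁ + n₂)) ℚ) (b : Fin m₁ → ℚ)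
    (D : Matrix (Fin m₂) (Fin (n₁ + n₂)) ℚ) (u : Fin m₂ → ℚ)
    (hsplit : SplitSystem A b D u)
    (s : Fin (n₁ + n₂) → ℚ) (hs : D.mulVec s ≤ u)
    (hsint : ∀ j : Fin (n₁ + n₂), n₁ ≤ (j : ℕ) → ∃ z : ℤ, s j = (z : ℚ)) :
    ∃ s' : Fin (n₁ + n₂) → ℚ, A.mulVec s' ≤ b ∧ D.mulVec s' ≤ u ∧
      ∀ j : Fin (n₁ + n₂), n₁ ≤ (j : ℕ) → ∃ z : ℤ, s' j = (z : ℚ) := by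
  obtain ⟨-, -, -, -, hrows⟩ := hsplit
  have hrays := fun i => exists_ray_of_not_bounded (hrows i)
  obtain ⟨z, hAz, hDz⟩ := exists_int_forall_mulVec_neg (exists_forall_mulVec_neg hrays)
  obtain ⟨t, ht⟩ := (eventually_mulVec_add_smul_le b s hAz).exists
  refine ⟨_, ht, mulVec_add_smul_le hs hDz t.cast_nonneg, fun j hj => ?_⟩
  obtain ⟨k, hk⟩ := hsint j hj
  exact ⟨k + t * z j, by simp [hk]⟩
end
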